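/- arXiv:math/0702086 — 3 statements merged into one kernel-verified Lean document; each statement's English description precedes it below -/
import Mathlib

section
/- Let R be a commutative integral domain. If the solution space of a given Hermite–Padé interpolation problem over R admits a normalised σ-basis, then this normalised σ-basis is uniquely determined: any two normalised σ-bases (p₁,…,p_m) and (q₁,…,q_m) of the same problem satisfy p_r = q_r for all r. -/
/-!
Reducedness makes the critical indices of the members of a normalised σ-basis pairwise
distinct, and then they behave like pivots: a combination `∑ γ_r • P_r` has the critical
index of one of its summands `γ_r • P_r` and a defect at most `defect P_r`. Hence a basis
member with critical index `j` has the largest defect among all solutions with critical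
index `j`, so the two bases have the same (defect, critical index) pairs, and sortedness puts
them in the same order. Finally `Q_s - P_s` is a solution whose component at every critical
index `j_r` has defect term larger than `defect P_r` (by reducedness if `r ≠ s`, because the
monic leading terms cancel if `r = s`), so it has no critical index and must vanish.
-/

open Polynomial

/-- The term `nᵢ - deg pᵢ` entering the defect, valued `⊤` when `pᵢ = 0`
(i.e. when `deg pᵢ = -∞`). -/
def defectTerm {K : Type*} [Semiring K] (ni : ℕ) (p : K[X]) : WithTop ℤ :=
  WithBot.recBotCoe (⊤ : WithTop ℤ) (fun d : ℕ => (((ni : ℤ) - (d : ℤ) : ℤ) : WithTop ℤ)) p.degree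

/-- The defect of a polynomial vector `p` with respect to the degree bounds `n`:
the minimum of `nᵢ - deg pᵢ` over all components (components with `pᵢ = 0`
contribute `⊤` and hence do not affect the minimum unless `p = 0`). -/
def defect {K : Type*} [Semiring K] {m : ℕ} (n : Fin m → ℕ) (p : Fin m → K[X]) : WithTop ℤ :=
  Finset.univ.inf fun i => defectTerm (n i) (p i)

/-- `p` is a solution of the Hermite–Padé interpolation problem given by the
power series `f` and the order `σ`: the coefficient of `x^k` in
`p₁·f₁ + ⋯ + p_m·f_m` vanishes for all `k < σ`, i.e. `ord (p·f) ≥ σ`. -/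
def IsSolution {K : Type*} [CommSemiring K] {m : ℕ} (f : Fin m → PowerSeries K) (σ : ℕ)
    (p : Fin m → K[X]) : Prop :=
  ∀ k < σ, PowerSeries.coeff k (∑ i, (p i : PowerSeries K) * f i) = 0

/-- `i` is the critical index of `p`: the least index at which the defect is attained. -/
def IsCriticalIndex {K : Type*} [Semiring K] {m : ℕ} (n : Fin m → ℕ) (p : Fin m → K[X])
    (i : Fin m) : Prop :=
  defectTerm (n i) (p i) = defect n p ∧ ∀ j : Fin m, j < i → defectTerm (n j) (p j) ≠ defect n p

/-- `p` is normalised: its component at its critical index is monic. -/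
def IsNormalisedVec {K : Type*} [Semiring K] {m : ℕ} (n : Fin m → ℕ) (p : Fin m → K[X]) : Prop :=
  ∃ i : Fin m, IsCriticalIndex n p i ∧ (p i).Monic

/-- `p` is reduced with respect to `q`: at the critical index `j` of `q` we have
`deg p_j < deg q_j`. -/
def ReducedWrt {K : Type*} [Semiring K] {m : ℕ} (n : Fin m → ℕ) (p q : Fin m → K[X]) : Prop :=
  ∀ j : Fin m, IsCriticalIndex n q j → (p j).degree < (q j).degree

/-- A sequence of polynomial vectors is sorted if for `r < s` either the defect of `P r`
is strictly larger than that of `P s`, or the defects agree and the critical index of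
`P r` is smaller than that of `P s`. -/
def IsSortedSeq {K : Type*} [Semiring K] {m : ℕ} (n : Fin m → ℕ)
    (P : Fin m → Fin m → K[X]) : Prop :=
  ∀ r s : Fin m, r < s →
    defect n (P s) < defect n (P r) ∨
      (defect n (P r) = defect n (P s) ∧
        ∀ i j : Fin m, IsCriticalIndex n (P r) i → IsCriticalIndex n (P s) j → i < j)

/-- A sequence of polynomial vectors is normalised if it is sorted, pairwise reduced,
and all its members are normalised. -/
def IsNormalisedSeq {K : Type*} [Semiring K] {m : ℕ} (n : Fin m → ℕ)
    (P : Fin m → Fin m → K[X]) : Prop :=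
  IsSortedSeq n P ∧ (∀ r s : Fin m, r ≠ s → ReducedWrt n (P r) (P s)) ∧
    ∀ r, IsNormalisedVec n (P r)

/-- `P` is a σ-basis of the Hermite–Padé interpolation problem given by `f`, `n` and `σ`:
every member is a solution, every solution `q` has a unique representation
`q = Σ_r α_r • P_r`, and in this representation `defect q ≤ defect (P r) - deg (α r)`
(written additively as `defect q + deg (α r) ≤ defect (P r)`) whenever `α r ≠ 0`. -/
def IsSigmaBasis {K : Type*} [CommRing K] {m : ℕ} (f : Fin m → PowerSeries K)
    (n : Fin m → ℕ) (σ : ℕ) (P : Fin m → Fin m → K[X]) : Prop :=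
  (∀ r, IsSolution f σ (P r)) ∧
    ∀ q : Fin m → K[X], IsSolution f σ q →
      (∃! α : Fin m → K[X], ∀ i, q i = ∑ r, α r * P r i) ∧
      ∀ α : Fin m → K[X], (∀ i, q i = ∑ r, α r * P r i) →
        ∀ r, α r ≠ 0 →
          defect n q + (((α r).natDegree : ℤ) : WithTop ℤ) ≤ defect n (P r)

namespace Polynomial

section Semiring
variable {R : Type*} [Semiring R] {ni : ℕ} {p q : R[X]}

@[simp]
lemma defectTerm_zero : defectTerm ni (0 : R[X]) = ⊤ := by
  simp [defectTerm]

lemma defectTerm_of_ne_zero (hp : p ≠ 0) :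
    defectTerm ni p = (((ni : ℤ) - p.natDegree : ℤ) : WithTop ℤ) := by
  rw [defectTerm, degree_eq_natDegree hp]
  rfl

lemma defectTerm_congr (h : p.degree = q.degree) : defectTerm ni p = defectTerm ni q := by
  rw [defectTerm, defectTerm, h]

lemma defectTerm_lt_defectTerm_iff :
    defectTerm ni p < defectTerm ni q ↔ q.degree < p.degree := by
  rcases eq_or_ne p 0 with rfl | hp
  · simp
  rcases eq_or_ne q 0 with rfl | hq
  · simp only [defectTerm_zero, defectTerm_of_ne_zero hp, degree_zero, WithTop.coe_lt_top,
      true_iff]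
    exact bot_lt_iff_ne_bot.mpr (degree_ne_bot.mpr hp)
  rw [defectTerm_of_ne_zero hp, defectTerm_of_ne_zero hq, WithTop.coe_lt_coe,
    ← natDegree_lt_natDegree_iff hq]
  omega

lemma defectTerm_le_defectTerm_iff :
    defectTerm ni p ≤ defectTerm ni q ↔ q.degree ≤ p.degree := by
  simpa only [not_lt] using defectTerm_lt_defectTerm_iff.not

lemma min_le_defectTerm_add :
    min (defectTerm ni p) (defectTerm ni q) ≤ defectTerm ni (p + q) := by
  rcases le_total p.degree q.degree with h | h
  · exact min_le_right _ _ |>.trans <| defectTerm_le_defectTerm_iff.mpr <|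
      (degree_add_le p q).trans (max_eq_right h).le
  · exact min_le_left _ _ |>.trans <| defectTerm_le_defectTerm_iff.mpr <|
      (degree_add_le p q).trans (max_eq_left h).le

lemma defectTerm_add_of_lt (h : defectTerm ni p < defectTerm ni q) :
    defectTerm ni (p + q) = defectTerm ni p :=
  defectTerm_congr (degree_add_eq_left_of_degree_lt (defectTerm_lt_defectTerm_iff.mp h))

lemma le_defectTerm_sum {ι : Type*} {s : Finset ι} {f : ι → R[X]} {c : WithTop ℤ}
    (h : ∀ r ∈ s, c ≤ defectTerm ni (f r)) : c ≤ defectTerm ni (∑ r ∈ s, f r) :=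
  Finset.sum_induction f (c ≤ defectTerm ni ·)
    (fun _ _ ha hb => (le_min ha hb).trans min_le_defectTerm_add) (by simp) h

lemma lt_defectTerm_sum {ι : Type*} {s : Finset ι} {f : ι → R[X]} {c : WithTop ℤ}
    (hc : c ≠ ⊤) (h : ∀ r ∈ s, c < defectTerm ni (f r)) :
    c < defectTerm ni (∑ r ∈ s, f r) :=
  Finset.sum_induction f (c < defectTerm ni ·)
    (fun _ _ ha hb => (lt_min ha hb).trans_le min_le_defectTerm_add)
    (by simpa [lt_top_iff_ne_top]) h

lemma defectTerm_mul [NoZeroDivisors R] {γ : R[X]} (hγ : γ ≠ 0) :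
    defectTerm ni (γ * p) + ((γ.natDegree : ℤ) : WithTop ℤ) = defectTerm ni p := by
  rcases eq_or_ne p 0 with rfl | hp
  · simp
  rw [defectTerm_of_ne_zero (mul_ne_zero hγ hp), defectTerm_of_ne_zero hp, natDegree_mul hγ hp,
    ← WithTop.coe_add]
  congr 1
  push_cast
  ring

end Semiring

section Ring
variable {R : Type*} [Ring R] {ni : ℕ} {p q : R[X]}

lemma defectTerm_neg : defectTerm ni (-p) = defectTerm ni p :=
  defectTerm_congr (degree_neg p)

lemma lt_defectTerm_sub {c : WithTop ℤ} (hp : c < defectTerm ni p) (hq : c < defectTerm ni q) :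
    c < defectTerm ni (p - q) := by
  rw [sub_eq_add_neg]
  exact (lt_min hp (defectTerm_neg (p := q) ▸ hq)).trans_le min_le_defectTerm_add

lemma Monic.defectTerm_lt_defectTerm_sub [Nontrivial R] (hp : p.Monic) (hq : q.Monic)
    (h : defectTerm ni p = defectTerm ni q) : defectTerm ni p < defectTerm ni (p - q) := by
  have hdeg : p.degree = q.degree :=
    le_antisymm (defectTerm_le_defectTerm_iff.mp h.ge) (defectTerm_le_defectTerm_iff.mp h.le)
  exact defectTerm_lt_defectTerm_iff.mpr <|
    degree_sub_lt_left hdeg hp.ne_zero (by rw [hp.leadingCoeff, hq.leadingCoeff])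

end Ring
end Polynomial

section CriticalIndex
variable {R : Type*} [Semiring R] {m : ℕ} {n : Fin m → ℕ} {p : Fin m → R[X]} {i k : Fin m}

lemma defect_le_defectTerm (k : Fin m) : defect n p ≤ defectTerm (n k) (p k) :=
  Finset.inf_le (Finset.mem_univ k)

lemma IsCriticalIndex.defect_lt (h : IsCriticalIndex n p i) (hk : k < i) :
    defect n p < defectTerm (n k) (p k) :=
  (defect_le_defectTerm k).lt_of_ne fun e => h.2 k hk e.symm

lemma IsCriticalIndex.unique {i' : Fin m} (h : IsCriticalIndex n p i)
    (h' : IsCriticalIndex n p i') : i = i' := by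
  rcases lt_trichotomy i i' with hlt | heq | hgt
  · exact absurd h.1 (h'.2 i hlt)
  · exact heq
  · exact absurd h'.1 (h.2 i' hgt)

lemma isCriticalIndex_of_forall {c : WithTop ℤ} (hi : defectTerm (n i) (p i) = c)
    (hle : ∀ k, c ≤ defectTerm (n k) (p k)) (hlt : ∀ k < i, c < defectTerm (n k) (p k)) :
    IsCriticalIndex n p i := by
  have hdef : defect n p = c :=
    le_antisymm (hi ▸ defect_le_defectTerm i) (Finset.le_inf fun k _ => hle k)
  exact ⟨hi.trans hdef.symm, fun k hk e => (hlt k hk).ne' (e.trans hdef)⟩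

variable [NoZeroDivisors R] {γ : R[X]}

lemma IsCriticalIndex.smul (h : IsCriticalIndex n p i) (hγ : γ ≠ 0) :
    IsCriticalIndex n (γ • p) i := by
  have hshift (a : Fin m) : defectTerm (n a) ((γ • p) a) + ((γ.natDegree : ℤ) : WithTop ℤ) =
      defectTerm (n a) (p a) := defectTerm_mul hγ
  refine isCriticalIndex_of_forall rfl (fun k => ?_) fun k hk => ?_
  · rw [← WithTop.add_le_add_iff_right WithTop.coe_ne_top, hshift i, hshift k, h.1]
    exact defect_le_defectTerm k
  · rw [← WithTop.add_lt_add_iff_right WithTop.coe_ne_top, hshift i, hshift k, h.1]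
    exact h.defect_lt hk

lemma defect_smul_le (hγ : γ ≠ 0) : defect n (γ • p) ≤ defect n p :=
  Finset.inf_mono_fun fun k _ => by
    rw [← defectTerm_mul (ni := n k) (p := p k) hγ]
    exact le_add_of_nonneg_right (by exact_mod_cast Int.natCast_nonneg γ.natDegree)

end CriticalIndex

section Pivot
variable {R : Type*} [Semiring R] {m : ℕ} {n : Fin m → ℕ} {ι : Type*}

lemma exists_isCriticalIndex_sum {s : Finset ι} (hs : s.Nonempty) {x : ι → Fin m → R[X]}
    {j : ι → Fin m} (hj : ∀ r ∈ s, IsCriticalIndex n (x r) (j r)) (hinj : Set.InjOn j s) :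
    ∃ t ∈ s, IsCriticalIndex n (∑ r ∈ s, x r) (j t) ∧
      defect n (∑ r ∈ s, x r) = defect n (x t) := by
  classical
  -- the summand of least defect, ties broken by least critical index, survives in the sum
  obtain ⟨t, ht, hmin⟩ := s.exists_min_image (fun r => toLex (defect n (x r), j r)) hs
  set μ := defect n (x t)
  have hmin' (r : ι) (hr : r ∈ s) :
      μ ≤ defect n (x r) ∧ (μ = defect n (x r) → j t ≤ j r) :=
    Prod.Lex.toLex_le_toLex'.mp (hmin r hr)
  have hge (r : ι) (hr : r ∈ s) (k : Fin m) : μ ≤ defectTerm (n k) (x r k) :=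
    (hmin' r hr).1.trans (defect_le_defectTerm k)
  have hgt (r : ι) (hr : r ∈ s) (k : Fin m) (hk : μ = defect n (x r) → k < j r) :
      μ < defectTerm (n k) (x r k) := by
    rcases (hmin' r hr).1.lt_or_eq with hlt | heq
    · exact hlt.trans_le (defect_le_defectTerm k)
    · exact heq.trans_lt ((hj r hr).defect_lt (hk heq))
  have hsum (k : Fin m) : (∑ r ∈ s, x r) k = ∑ r ∈ s, x r k := Finset.sum_apply k s x
  have hpivot : defectTerm (n (j t)) ((∑ r ∈ s, x r) (j t)) = μ := by
    by_cases hμ : μ = ⊤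
    · rw [hμ, ← top_le_iff, ← hμ, hsum]
      exact le_defectTerm_sum fun r hr => hge r hr (j t)
    have hrest : μ < defectTerm (n (j t)) (∑ r ∈ s.erase t, x r (j t)) := by
      refine lt_defectTerm_sum hμ fun r hr => ?_
      obtain ⟨hrt, hr⟩ := Finset.mem_erase.mp hr
      exact hgt r hr (j t) fun heq =>
        ((hmin' r hr).2 heq).lt_of_ne fun e => hrt (hinj hr ht e.symm)
    rw [hsum, ← Finset.add_sum_erase s _ ht, defectTerm_add_of_lt ((hj t ht).1.trans_lt hrest)]
    exact (hj t ht).1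
  have hcrit : IsCriticalIndex n (∑ r ∈ s, x r) (j t) :=
    isCriticalIndex_of_forall hpivot
      (fun k => hsum k ▸ le_defectTerm_sum fun r hr => hge r hr k)
      fun k hk => hsum k ▸ lt_defectTerm_sum (hgt t ht k fun _ => hk).ne_top
        fun r hr => hgt r hr k fun heq => hk.trans_le ((hmin' r hr).2 heq)
  exact ⟨t, ht, hcrit, hcrit.1.symm.trans hpivot⟩

end Pivot

section Basis
variable {R : Type*} [CommRing R] {m : ℕ} {n : Fin m → ℕ}

lemma IsSolution.sub {f : Fin m → PowerSeries R} {σ : ℕ} {p q : Fin m → R[X]}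
    (hp : IsSolution f σ p) (hq : IsSolution f σ q) : IsSolution f σ (p - q) := fun k hk => by
  simp only [Pi.sub_apply, Polynomial.coe_sub, sub_mul, Finset.sum_sub_distrib, map_sub, hp k hk,
    hq k hk, sub_zero]

variable [NoZeroDivisors R]

lemma exists_isCriticalIndex_sum_smul {ι : Type*} [Fintype ι] {P : ι → Fin m → R[X]}
    {j : ι → Fin m} (hj : ∀ r, IsCriticalIndex n (P r) (j r)) (hinj : Function.Injective j)
    {γ : ι → R[X]} (h0 : ∑ r, γ r • P r ≠ 0) :
    ∃ r, IsCriticalIndex n (∑ r, γ r • P r) (j r) ∧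
      defect n (∑ r, γ r • P r) ≤ defect n (P r) := by
  classical
  have hγ (r : ι) (hr : r ∈ Finset.univ.filter fun r => γ r • P r ≠ 0) : γ r ≠ 0 :=
    fun h => (Finset.mem_filter.mp hr).2 (by rw [h, zero_smul])
  rw [← Finset.sum_filter_ne_zero] at h0 ⊢
  obtain ⟨r, hr, hcrit, hdef⟩ := exists_isCriticalIndex_sum
    (Finset.nonempty_of_sum_ne_zero h0) (fun r hr => (hj r).smul (hγ r hr)) hinj.injOn
  exact ⟨r, hcrit, hdef ▸ defect_smul_le (hγ r hr)⟩

variable {f : Fin m → PowerSeries R} {σ : ℕ} {P : Fin m → Fin m → R[X]}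
  {j : Fin m → Fin m}

lemma IsSigmaBasis.exists_isCriticalIndex (hP : IsSigmaBasis f n σ P)
    (hj : ∀ r, IsCriticalIndex n (P r) (j r)) (hinj : Function.Injective j)
    {q : Fin m → R[X]} (hq : IsSolution f σ q) (h0 : q ≠ 0) :
    ∃ r, IsCriticalIndex n q (j r) ∧ defect n q ≤ defect n (P r) := by
  obtain ⟨⟨α, hα, -⟩, -⟩ := hP.2 q hq
  obtain rfl : q = ∑ r, α r • P r := funext fun i => by simp [hα i, Finset.sum_apply]
  exact exists_isCriticalIndex_sum_smul hj hinj h0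

lemma IsSigmaBasis.defect_le_of_isCriticalIndex (hP : IsSigmaBasis f n σ P)
    (hj : ∀ r, IsCriticalIndex n (P r) (j r)) (hinj : Function.Injective j)
    {q : Fin m → R[X]} (hq : IsSolution f σ q) (h0 : q ≠ 0) {r : Fin m}
    (hcrit : IsCriticalIndex n q (j r)) : defect n q ≤ defect n (P r) := by
  obtain ⟨r', hcrit', hle⟩ := hP.exists_isCriticalIndex hj hinj hq h0
  rwa [hinj (hcrit.unique hcrit')]

end Basis

section Sorted
variable {R : Type*} [Semiring R] {m : ℕ} {n : Fin m → ℕ} {P Q : Fin m → Fin m → R[X]}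
  {j jP jQ : Fin m → Fin m}

lemma ReducedWrt.defect_lt {p q : Fin m → R[X]} {i : Fin m} (h : ReducedWrt n p q)
    (hi : IsCriticalIndex n q i) : defect n q < defectTerm (n i) (p i) :=
  hi.1 ▸ defectTerm_lt_defectTerm_iff.mpr (h i hi)

lemma injective_of_reducedWrt (hred : ∀ r s, r ≠ s → ReducedWrt n (P r) (P s))
    (hj : ∀ r, IsCriticalIndex n (P r) (j r)) : Function.Injective j := by
  intro r s h
  by_contra hrs
  have hrs' := hred r s hrs (j s) (hj s)
  have hsr := hred s r (Ne.symm hrs) (j r) (hj r)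
  rw [h] at hsr
  exact lt_asymm hrs' hsr

def pivot (n : Fin m → ℕ) (P : Fin m → Fin m → R[X]) (j : Fin m → Fin m) (r : Fin m) :
    (WithTop ℤ)ᵒᵈ ×ₗ Fin m :=
  toLex (OrderDual.toDual (defect n (P r)), j r)

lemma IsSortedSeq.strictMono_pivot (hP : IsSortedSeq n P)
    (hj : ∀ r, IsCriticalIndex n (P r) (j r)) : StrictMono (pivot n P j) := by
  intro r s hrs
  rcases hP r s hrs with hlt | ⟨heq, hcrit⟩
  · exact Prod.Lex.toLex_lt_toLex.mpr (Or.inl (OrderDual.toDual_lt_toDual.mpr hlt))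
  · exact Prod.Lex.toLex_lt_toLex.mpr
      (Or.inr ⟨congrArg OrderDual.toDual heq, hcrit _ _ (hj r) (hj s)⟩)

lemma IsSortedSeq.critical_eq_and_defect_eq (hP : IsSortedSeq n P) (hQ : IsSortedSeq n Q)
    (hjP : ∀ r, IsCriticalIndex n (P r) (jP r)) (hjQ : ∀ r, IsCriticalIndex n (Q r) (jQ r))
    (hsurjP : Function.Surjective jP) (hsurjQ : Function.Surjective jQ)
    (hdef : ∀ r s, jP r = jQ s → defect n (P r) = defect n (Q s)) :
    jP = jQ ∧ ∀ r, defect n (P r) = defect n (Q r) := by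
  have hpivot : pivot n P jP = pivot n Q jQ := by
    refine ((hP.strictMono_pivot hjP).range_inj (hQ.strictMono_pivot hjQ)).mp
      (Set.Subset.antisymm ?_ ?_)
    · rintro _ ⟨r, rfl⟩
      obtain ⟨s, hs⟩ := hsurjQ (jP r)
      exact ⟨s, by rw [pivot, pivot, hs, hdef r s hs.symm]⟩
    · rintro _ ⟨s, rfl⟩
      obtain ⟨r, hr⟩ := hsurjP (jQ s)
      exact ⟨r, by rw [pivot, pivot, hr, hdef r s hr]⟩
  have hpivot_apply (r : Fin m) := Prod.ext_iff.mp (congrFun hpivot r)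
  exact ⟨funext fun r => (hpivot_apply r).2, fun r => (hpivot_apply r).1⟩

end Sorted

lemma defect_lt_defectTerm_sub {R : Type*} [Ring R] [Nontrivial R] {m : ℕ} {n : Fin m → ℕ}
    {P Q : Fin m → Fin m → R[X]} {j : Fin m → Fin m}
    (hredP : ∀ r s, r ≠ s → ReducedWrt n (P r) (P s))
    (hredQ : ∀ r s, r ≠ s → ReducedWrt n (Q r) (Q s))
    (hjP : ∀ r, IsCriticalIndex n (P r) (j r)) (hjQ : ∀ r, IsCriticalIndex n (Q r) (j r))
    (hmonP : ∀ r, (P r (j r)).Monic) (hmonQ : ∀ r, (Q r (j r)).Monic)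
    (hdef : ∀ r, defect n (P r) = defect n (Q r)) (r s : Fin m) :
    defect n (P r) < defectTerm (n (j r)) (Q s (j r) - P s (j r)) := by
  rcases eq_or_ne s r with rfl | hsr
  · calc defect n (P s) = defectTerm (n (j s)) (Q s (j s)) := (hdef s).trans (hjQ s).1.symm
      _ < _ := (hmonQ s).defectTerm_lt_defectTerm_sub (hmonP s)
        (by rw [(hjQ s).1, (hjP s).1, hdef])
  · exact lt_defectTerm_sub ((hdef r).symm ▸ (hredQ s r hsr).defect_lt (hjQ r))
      ((hredP s r hsr).defect_lt (hjP r))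

theorem normalised_sigma_basis_unique_general {R : Type*} [CommRing R] [IsDomain R] {m : ℕ}
    (f : Fin m → PowerSeries R) (n : Fin m → ℕ) (σ : ℕ)
    (P Q : Fin m → Fin m → R[X])
    (hP : IsSigmaBasis f n σ P) (hQ : IsSigmaBasis f n σ Q)
    (hPn : IsNormalisedSeq n P) (hQn : IsNormalisedSeq n Q) :
    P = Q := by
  choose jP hjP hmonP using hPn.2.2
  choose jQ hjQ hmonQ using hQn.2.2
  have hinjP := injective_of_reducedWrt hPn.2.1 hjP
  have hinjQ := injective_of_reducedWrt hQn.2.1 hjQ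
  have hP0 (r : Fin m) : P r ≠ 0 := fun h => (hmonP r).ne_zero (congrFun h (jP r))
  have hQ0 (r : Fin m) : Q r ≠ 0 := fun h => (hmonQ r).ne_zero (congrFun h (jQ r))
  have hdef (r s : Fin m) (h : jP r = jQ s) : defect n (P r) = defect n (Q s) :=
    le_antisymm (hQ.defect_le_of_isCriticalIndex hjQ hinjQ (hP.1 r) (hP0 r) (h ▸ hjP r))
      (hP.defect_le_of_isCriticalIndex hjP hinjP (hQ.1 s) (hQ0 s) (h ▸ hjQ s))
  obtain ⟨rfl, hdefeq⟩ := hPn.1.critical_eq_and_defect_eq hQn.1 hjP hjQ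
    (Finite.injective_iff_surjective.mp hinjP) (Finite.injective_iff_surjective.mp hinjQ) hdef
  funext s
  by_contra hne
  obtain ⟨r, hcrit, hle⟩ :=
    hP.exists_isCriticalIndex hjP hinjP ((hQ.1 s).sub (hP.1 s)) (sub_ne_zero.mpr (Ne.symm hne))
  exact (defect_lt_defectTerm_sub hPn.2.1 hQn.2.1 hjP hjQ hmonP hmonQ hdefeq r s).not_ge
    (hcrit.1.trans_le hle)

/-- **Uniqueness of the normalised σ-basis.**  Over a commutative integral domain `R`,
if the solution space of a Hermite–Padé interpolation problem admits a normalised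
σ-basis, then it is uniquely determined: any two normalised σ-bases coincide. -/
theorem normalised_sigma_basis_unique {R : Type*} [CommRing R] [IsDomain R] {m : ℕ}
    (f : Fin m → PowerSeries R) (n : Fin m → ℕ) (σ : ℕ)
    (P Q : Fin m → Fin m → R[X])
    (hP0 : ∀ r, P r ≠ 0) (hQ0 : ∀ r, Q r ≠ 0)
    (hP : IsSigmaBasis f n σ P) (hQ : IsSigmaBasis f n σ Q)
    (hPn : IsNormalisedSeq n P) (hQn : IsNormalisedSeq n Q) :
    P = Q :=
  normalised_sigma_basis_unique_general f n σ P Q hP hQ hPn hQn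
end

section
/- Let K be a field. Any two σ-bases of the same Hermite–Padé interpolation problem over K have the same multiset of defects: if (p₁,…,p_m) and (q₁,…,q_m) are σ-bases of the same problem, both indexed so that defects are weakly decreasing, then defect(p_r) = defect(q_r) for all r. -/
open Polynomial

/-!
The two bases are related by transition matrices `A`, `B` over `K[X]` with `A * B = 1`, and the
defect inequality in the definition of a σ-basis says that `A r s ≠ 0` forces
`defect (P r) ≤ defect (Q s)`. If `defect (Q k) < defect (P k)` for some `k`, monotonicity
of both defect sequences makes `A` vanish on the block of rows `r ≤ k` and columns `s ≥ k`.
These `k + 1` rows then live in `k` columns, so `det A = 0`, contradicting `A * B = 1`.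
-/

namespace Matrix

variable {ι R : Type*} [Fintype ι] [DecidableEq ι] [LinearOrder ι] [CommRing R]

theorem det_eq_zero_of_zero_block {A : Matrix ι ι R} (k : ι)
    (h : ∀ r s, r ≤ k → k ≤ s → A r s = 0) : A.det = 0 := by
  rw [A.twoBlockTriangular_det' (· ≤ k) fun r hr s hs => h r s hr (le_of_not_ge hs)]
  refine mul_eq_zero_of_left (det_eq_zero_of_column_eq_zero ⟨k, le_rfl⟩ fun r => ?_) _
  exact h r k r.2 le_rfl

theorem le_of_isUnit_det_of_antitone [Nontrivial R] {α : Type*} [LinearOrder α]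
    {A : Matrix ι ι R} (hA : IsUnit A.det) {d e : ι → α} (hd : Antitone d) (he : Antitone e)
    (hsupp : ∀ r s, A r s ≠ 0 → d r ≤ e s) (k : ι) : d k ≤ e k := by
  by_contra! hlt
  refine hA.ne_zero (det_eq_zero_of_zero_block k fun r s hr hs => ?_)
  by_contra hrs
  exact (hsupp r s hrs).not_gt ((he hs).trans_lt (hlt.trans_le (hd hr)))

end Matrix

namespace IsSigmaBasis

variable {K : Type*} [CommRing K] {m : ℕ} {f : Fin m → PowerSeries K} {n : Fin m → ℕ} {σ : ℕ}
  {P : Fin m → Fin m → K[X]}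

theorem exists_repr {ι : Type*} (hP : IsSigmaBasis f n σ P) {Q : ι → Fin m → K[X]}
    (hQ : ∀ r, IsSolution f σ (Q r)) :
    ∃ A : Matrix ι (Fin m) K[X], A * Matrix.of P = Matrix.of Q ∧
      ∀ r s, A r s ≠ 0 → defect n (Q r) ≤ defect n (P s) := by
  choose A hA using fun r => (hP.2 (Q r) (hQ r)).1.exists
  refine ⟨Matrix.of A, ?_, fun r s hrs => ?_⟩
  · ext r i
    simp only [Matrix.mul_apply, Matrix.of_apply, hA r i]
  · have hdeg : (0 : WithTop ℤ) ≤ (((A r s).natDegree : ℤ) : WithTop ℤ) := by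
      exact_mod_cast Int.natCast_nonneg _
    exact (le_add_of_nonneg_right hdeg).trans ((hP.2 (Q r) (hQ r)).2 (A r) (hA r) s hrs)

theorem eq_one_of_mul_eq_self (hP : IsSigmaBasis f n σ P) {C : Matrix (Fin m) (Fin m) K[X]}
    (hC : C * Matrix.of P = Matrix.of P) : C = 1 := by
  have hrow : ∀ D : Matrix (Fin m) (Fin m) K[X], D * Matrix.of P = Matrix.of P →
      ∀ r i, P r i = ∑ t, D r t * P t i := fun D hD r i => by
    simpa [Matrix.mul_apply] using (congrFun (congrFun hD r) i).symm
  ext r t : 1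
  exact congrFun ((hP.2 (P r) (hP.1 r)).1.unique (hrow C hC r) (hrow 1 (Matrix.one_mul _) r)) t

end IsSigmaBasis

/-- **The multiset of defects is an invariant of the problem.**  If `P` and `Q` are
two σ-bases of the same Hermite–Padé interpolation problem over a field `K`, both
indexed so that defects are weakly decreasing, then `defect (P r) = defect (Q r)`
for all `r`. -/
theorem sigma_basis_defects_invariant {K : Type*} [Field K] {m : ℕ}
    (f : Fin m → PowerSeries K) (n : Fin m → ℕ) (σ : ℕ)
    (P Q : Fin m → Fin m → K[X])
    (hP : IsSigmaBasis f n σ P) (hQ : IsSigmaBasis f n σ Q)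
    (hPdec : ∀ r s : Fin m, r ≤ s → defect n (P s) ≤ defect n (P r))
    (hQdec : ∀ r s : Fin m, r ≤ s → defect n (Q s) ≤ defect n (Q r)) :
    ∀ r, defect n (P r) = defect n (Q r) := by
  obtain ⟨A, hA, hAdef⟩ := hQ.exists_repr hP.1
  obtain ⟨B, hB, hBdef⟩ := hP.exists_repr hQ.1
  have hAB : A * B = 1 := hP.eq_one_of_mul_eq_self (by rw [Matrix.mul_assoc, hB, hA])
  have hBA : B * A = 1 := hQ.eq_one_of_mul_eq_self (by rw [Matrix.mul_assoc, hA, hB])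
  intro r
  exact le_antisymm
    (Matrix.le_of_isUnit_det_of_antitone (Matrix.isUnit_det_of_right_inverse hAB)
      (fun _ _ => hPdec _ _) (fun _ _ => hQdec _ _) hAdef r)
    (Matrix.le_of_isUnit_det_of_antitone (Matrix.isUnit_det_of_right_inverse hBA)
      (fun _ _ => hQdec _ _) (fun _ _ => hPdec _ _) hBdef r)
end

section
/- Let R be a commutative integral domain, I ⊆ R a prime ideal, and A an s×t matrix with entries in R. Let A' be the reduction of A modulo I, let R_I denote the localisation of R at I (the ring of fractions r/u with r ∈ R and u ∈ R∖I), and let π : R_I → Frac(R/I) be the ring homomorphism sending r/u to (r mod I)/(u mod I). If the dimension over Frac(R) of the kernel of A equals the dimension over Frac(R/I) of the kernel of A', then the kernel of A' over Frac(R/I) equals the image under π (applied entrywise) of the set of vectors v ∈ (R_I)^t with A·v = 0. -/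
/-!
Write `L = R_I` (a local ring with residue map `π`, embedded in `Frac R`) and `B` for `A` viewed
over `L`. Let `r` be the rank of `A'` and choose an `r × r` minor `M` of `A'` with nonzero
determinant. The same minor of `B` has determinant outside the maximal ideal, hence is invertible
over `L`. Over `Frac R` the matrix has rank `r` as well, so it factors through this minor as
`B = B_{·,γ} M⁻¹ B_{ρ,·}`; by injectivity of `L → Frac R` this factorisation holds over `L`,
i.e. `B Y B = B` for some `Y`. Now if `A' w = 0` and `u` lifts `w`, then `u - Y B u` lies in
the kernel of `B` and still reduces to `w`.
-/

namespace Matrix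

theorem _root_.RingHom.comp_mulVec {m n R S : Type*} [Fintype n] [CommSemiring R]
    [CommSemiring S] (f : R →+* S) (M : Matrix m n R) (v : n → R) :
    f ∘ (M *ᵥ v) = M.map f *ᵥ (f ∘ v) :=
  funext (f.map_mulVec M v)

theorem exists_eq_mul_of_range_mulVecLin_le {m n ι R : Type*} [Fintype n] [Fintype ι]
    [CommSemiring R] {B : Matrix m n R} {C : Matrix m ι R}
    (h : LinearMap.range B.mulVecLin ≤ LinearMap.range C.mulVecLin) :
    ∃ X : Matrix ι n R, B = C * X := by
  have hcol : ∀ j, ∃ x, C *ᵥ x = B.col j := fun j =>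
    h (by rw [range_mulVecLin]; exact Submodule.subset_span ⟨j, rfl⟩)
  choose x hx using hcol
  refine ⟨of fun i j => x j i, ?_⟩
  ext i j
  rw [mul_apply, ← col_apply B, ← hx j]
  rfl

section Field

variable {m n ι K : Type*} [Fintype n] [Field K]

theorem rank_add_finrank_ker_mulVecLin (B : Matrix m n K) :
    B.rank + Module.finrank K (LinearMap.ker B.mulVecLin) = Fintype.card n := by
  rw [rank, LinearMap.finrank_range_add_finrank_ker, Module.finrank_fintype_fun_eq_card]

theorem exists_linearIndependent_cols (B : Matrix m n K) :
    ∃ γ : Fin B.rank → n, LinearIndependent K (B.submatrix id γ).col := by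
  obtain ⟨κ, a, ha, hspan, hli⟩ := exists_linearIndependent' K B.col
  have : Fintype κ := Fintype.ofInjective a ha
  have hcard : Fintype.card κ = B.rank := by
    rw [linearIndependent_iff_card_eq_finrank_span.mp hli, Set.finrank, hspan,
      rank_eq_finrank_span_cols]
  exact ⟨a ∘ (Fintype.equivFinOfCardEq hcard).symm, hli.comp _ (Equiv.injective _)⟩

theorem exists_submatrix_det_ne_zero [Fintype m] (B : Matrix m n K) :
    ∃ (ρ : Fin B.rank → m) (γ : Fin B.rank → n), (B.submatrix ρ γ).det ≠ 0 := by
  obtain ⟨γ, hγ⟩ := B.exists_linearIndependent_cols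
  have hrank : (B.submatrix id γ)ᵀ.rank = B.rank := by
    rw [LinearIndependent.rank_matrix hγ, Fintype.card_fin]
  obtain ⟨ρ, hρ⟩ := (B.submatrix id γ)ᵀ.exists_linearIndependent_cols
  refine ⟨ρ ∘ Fin.cast hrank.symm, γ, ?_⟩
  rw [← isUnit_iff_ne_zero, ← isUnit_iff_isUnit_det, ← linearIndependent_rows_iff_isUnit]
  exact hρ.comp _ (Fin.cast_injective _)

theorem eq_submatrix_mul_mul_submatrix_of_rank_le [Fintype ι] [DecidableEq ι]
    (B : Matrix m n K) (ρ : ι → m) (γ : ι → n) (N : Matrix ι ι K)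
    (hN : N * B.submatrix ρ γ = 1) (hrank : B.rank ≤ Fintype.card ι) :
    B = B.submatrix id γ * N * B.submatrix ρ id := by
  set C := B.submatrix id γ
  have hinj : Function.Injective C.mulVecLin := fun x y hxy => by
    have hN' : ∀ z, z = N *ᵥ ((C *ᵥ z) ∘ ρ) := fun z => by
      rw [show (C *ᵥ z) ∘ ρ = B.submatrix ρ γ *ᵥ z from rfl, mulVec_mulVec, hN, one_mulVec]
    rw [hN' x, hN' y]
    exact congrArg (fun v => N *ᵥ (v ∘ ρ)) hxy
  have hrange : LinearMap.range C.mulVecLin = LinearMap.range B.mulVecLin := by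
    apply Submodule.eq_of_le_of_finrank_le
    · rw [range_mulVecLin, range_mulVecLin]
      exact Submodule.span_mono (Set.range_comp_subset_range γ B.col)
    · rwa [LinearMap.finrank_range_of_inj hinj, Module.finrank_fintype_fun_eq_card]
  obtain ⟨X, hCX⟩ := exists_eq_mul_of_range_mulVecLin_le hrange.ge
  have hρX : B.submatrix ρ id = B.submatrix ρ γ * X := by
    conv_lhs => rw [hCX]
    rw [submatrix_mul _ _ ρ id id Function.bijective_id, submatrix_id_id]
    rfl
  calc B = C * X := hCX
    _ = C * (N * B.submatrix ρ γ) * X := by rw [hN, Matrix.mul_one]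
    _ = C * N * B.submatrix ρ id := by rw [hρX]; simp only [Matrix.mul_assoc]

end Field

section Reduction

variable {m n L K k : Type*} [Fintype m] [Fintype n] [CommRing L]

theorem exists_mul_mul_eq_self_of_rank_le [Field K] [Field k] [DecidableEq m] [DecidableEq n]
    {φ : L →+* K} (hφ : Function.Injective φ) {π : L →+* k} (hunit : ∀ x, π x ≠ 0 → IsUnit x)
    (B : Matrix m n L) (hrank : (B.map φ).rank ≤ (B.map π).rank) :
    ∃ Y : Matrix n m L, B * Y * B = B := by
  obtain ⟨ρ, γ, hdet⟩ := (B.map π).exists_submatrix_det_ne_zero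
  set M := B.submatrix ρ γ
  have hM : IsUnit M.det :=
    hunit _ (by rwa [RingHom.map_det, RingHom.mapMatrix_apply, ← submatrix_map])
  refine ⟨(1 : Matrix n n L).submatrix id γ * M⁻¹ * (1 : Matrix m m L).submatrix ρ id, ?_⟩
  calc B * ((1 : Matrix n n L).submatrix id γ * M⁻¹ * (1 : Matrix m m L).submatrix ρ id) * B
      = B * (1 : Matrix n n L).submatrix id γ * M⁻¹ *
          ((1 : Matrix m m L).submatrix ρ id * B) := by
        simp only [Matrix.mul_assoc]
    _ = B.submatrix id γ * M⁻¹ * B.submatrix ρ id := by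
        rw [show B * (1 : Matrix n n L).submatrix id γ = B.submatrix id γ from
            mul_submatrix_one (Equiv.refl n) γ B,
          show (1 : Matrix m m L).submatrix ρ id * B = B.submatrix ρ id from
            one_submatrix_mul ρ (Equiv.refl m) B]
    _ = B := by
        apply map_injective hφ
        beta_reduce
        rw [Matrix.map_mul, Matrix.map_mul, ← submatrix_map, ← submatrix_map]
        refine ((B.map φ).eq_submatrix_mul_mul_submatrix_of_rank_le ρ γ (M⁻¹.map φ) ?_
          (by simpa using hrank)).symm
        rw [submatrix_map, ← Matrix.map_mul, nonsing_inv_mul _ hM,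
          Matrix.map_one _ φ.map_zero φ.map_one]

theorem exists_lift_mulVec_eq_zero_of_mul_mul_eq_self [CommRing k] {π : L →+* k}
    (hπ : Function.Surjective π) {B : Matrix m n L} {Y : Matrix n m L} (hY : B * Y * B = B)
    {w : n → k} (hw : B.map π *ᵥ w = 0) : ∃ v, B *ᵥ v = 0 ∧ π ∘ v = w := by
  obtain ⟨u, rfl⟩ := hπ.comp_left w
  refine ⟨u - Y *ᵥ (B *ᵥ u), ?_, ?_⟩
  · rw [mulVec_sub, mulVec_mulVec, mulVec_mulVec, hY, sub_self]
  · have hBu : π ∘ (B *ᵥ u) = 0 := by rw [π.comp_mulVec, hw]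
    calc π ∘ (u - Y *ᵥ (B *ᵥ u)) = π ∘ u - π ∘ (Y *ᵥ (B *ᵥ u)) :=
          funext fun _ => map_sub π _ _
      _ = π ∘ u := by rw [π.comp_mulVec, hBu, mulVec_zero, sub_zero]

theorem ker_map_eq_image_ker_of_rank_le [IsLocalRing L] [Field K] [Field k] [DecidableEq m]
    [DecidableEq n] {φ : L →+* K} (hφ : Function.Injective φ) {π : L →+* k}
    (hπ : Function.Surjective π) (B : Matrix m n L) (hrank : (B.map φ).rank ≤ (B.map π).rank) :
    (LinearMap.ker (B.map π).mulVecLin : Set (n → k)) = (π ∘ ·) '' {v | B *ᵥ v = 0} := by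
  have hunit : ∀ x, π x ≠ 0 → IsUnit x := fun x hx => by_contra fun h => hx <| by
    rw [← RingHom.mem_ker, IsLocalRing.ker_eq_maximalIdeal π hπ]
    exact h
  obtain ⟨Y, hY⟩ := exists_mul_mul_eq_self_of_rank_le hφ hunit B hrank
  ext w
  constructor
  · exact exists_lift_mulVec_eq_zero_of_mul_mul_eq_self hπ hY
  · rintro ⟨v, hv, rfl⟩
    rw [SetLike.mem_coe, LinearMap.mem_ker, mulVecLin_apply, ← π.comp_mulVec, hv]
    exact funext fun _ => map_zero π

end Reduction

end Matrix

theorem Localization.AtPrime.surjective_of_map_algebraMap {R : Type*} [CommRing R]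
    (I : Ideal R) [I.IsPrime] (π : Localization.AtPrime I →+* FractionRing (R ⧸ I))
    (hπ : ∀ r : R, π (algebraMap R (Localization.AtPrime I) r) =
      algebraMap (R ⧸ I) (FractionRing (R ⧸ I)) (Ideal.Quotient.mk I r)) :
    Function.Surjective π := by
  let e := (FractionRing.algEquiv (R ⧸ I) I.ResidueField).symm
  have hπe : π = (e : I.ResidueField →+* FractionRing (R ⧸ I)).comp
      (IsLocalRing.residue (Localization.AtPrime I)) :=
    IsLocalization.ringHom_ext I.primeCompl <| RingHom.ext fun r => by
      simp [hπ, e, IsScalarTower.algebraMap_apply R (Localization.AtPrime I) I.ResidueField]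
  rw [hπe]
  exact e.surjective.comp IsLocalRing.residue_surjective

/-- **Good reduction of kernels.**  Let `R` be a commutative integral domain, `I ⊆ R`
a prime ideal and `A` an `s × t` matrix over `R`.  Let `A'` be the reduction of `A`
modulo `I`, let `R_I` be the localisation of `R` at `I`, and let
`π : R_I → Frac (R ⧸ I)` be the ring homomorphism sending `r / u` to
`(r mod I) / (u mod I)` (characterised by `π (r / 1) = (r mod I) / 1` for `r ∈ R`).
If the dimension over `Frac R` of the kernel of `A` equals the dimension over
`Frac (R ⧸ I)` of the kernel of `A'`, then the kernel of `A'` over `Frac (R ⧸ I)`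
is exactly the image under `π` (applied entrywise) of the set of vectors
`v ∈ R_I ^ t` with `A · v = 0`. -/
theorem kernel_eq_image_of_good_reduction {R : Type*} [CommRing R] [IsDomain R]
    (I : Ideal R) [I.IsPrime] {s t : ℕ} (A : Matrix (Fin s) (Fin t) R)
    (π : Localization.AtPrime I →+* FractionRing (R ⧸ I))
    (hπ : ∀ r : R,
      π (algebraMap R (Localization.AtPrime I) r) =
        algebraMap (R ⧸ I) (FractionRing (R ⧸ I)) (Ideal.Quotient.mk I r))
    (hdim : Module.finrank (FractionRing R)
          (LinearMap.ker (A.map (algebraMap R (FractionRing R))).mulVecLin) =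
        Module.finrank (FractionRing (R ⧸ I))
          (LinearMap.ker
            (A.map ((algebraMap (R ⧸ I) (FractionRing (R ⧸ I))).comp
              (Ideal.Quotient.mk I))).mulVecLin)) :
    (LinearMap.ker
        (A.map ((algebraMap (R ⧸ I) (FractionRing (R ⧸ I))).comp
          (Ideal.Quotient.mk I))).mulVecLin : Set (Fin t → FractionRing (R ⧸ I))) =
      (fun v : Fin t → Localization.AtPrime I => π ∘ v) ''
        {v : Fin t → Localization.AtPrime I |
          (A.map (algebraMap R (Localization.AtPrime I))).mulVec v = 0} := by
  let φ : Localization.AtPrime I →+* FractionRing R :=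
    IsLocalization.map (T := nonZeroDivisors R) _ (RingHom.id R) I.primeCompl_le_nonZeroDivisors
  have hφ : Function.Injective φ :=
    IsLocalization.map_injective_of_injective' I.primeCompl R (f := RingHom.id R)
      (N := nonZeroDivisors R) (FractionRing R) I.primeCompl_le_nonZeroDivisors
      zero_notMem_nonZeroDivisors Function.injective_id
  have hAφ : (A.map (algebraMap R _)).map φ = A.map (algebraMap R (FractionRing R)) := by
    rw [Matrix.map_map]
    exact congrArg A.map (funext (IsLocalization.map_eq _))
  have hAπ : (A.map (algebraMap R _)).map π =
      A.map ((algebraMap (R ⧸ I) (FractionRing (R ⧸ I))).comp (Ideal.Quotient.mk I)) := by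
    rw [Matrix.map_map]
    exact congrArg A.map (funext hπ)
  have hrank :
      ((A.map (algebraMap R _)).map φ).rank ≤ ((A.map (algebraMap R _)).map π).rank := by
    have hK := Matrix.rank_add_finrank_ker_mulVecLin (A.map (algebraMap R (FractionRing R)))
    have hk := Matrix.rank_add_finrank_ker_mulVecLin
      (A.map ((algebraMap (R ⧸ I) (FractionRing (R ⧸ I))).comp (Ideal.Quotient.mk I)))
    rw [hAφ, hAπ]
    omega
  rw [← hAπ]
  exact Matrix.ker_map_eq_image_ker_of_rank_le hφ
    (Localization.AtPrime.surjective_of_map_algebraMap I π hπ) _ hrank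
end
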